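/- (Kahane contraction principle) Let X be a Banach space, N ∈ ℕ, x_1, …, x_N ∈ X and λ_1, …, λ_N scalars with |λ_j| ≤ 1 for all j. If ε_1, …, ε_N are independent Rademacher random variables (each taking values ±1 with probability 1/2), then E‖∑_{j=1}^N ε_j λ_j x_j‖ ≤ 2 E‖∑_{j=1}^N ε_j x_j‖. -/

import Mathlib

/-!
For real coefficients `a ∈ [-1, 1]^ι`, the map `a ↦ ∑_ε ‖∑_j ε_j a_j y_j‖` is convex, so on the
cube it is maximised at a vertex, i.e. a sign vector `η`; there it equals `∑_ε ‖∑_j ε_j y_j‖`,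
because `ε ↦ ε η` permutes the sign patterns. A complex `λ` splits as `Re λ + i Im λ` with both
parts in `[-1, 1]`, and the triangle inequality for this splitting costs the factor `2`.
-/

noncomputable section

/-- Expectation `E‖∑_{j} ε_j x_j‖` over independent random signs `ε : Fin N → {±1}`. -/
def radAvg {X : Type*} [NormedAddCommGroup X] [NormedSpace ℂ X]
    (N : ℕ) (x : Fin N → X) : ℝ :=
  ((2 : ℝ) ^ N)⁻¹ *
    ∑ σ : Fin N → Bool, ‖∑ j, (if σ j then (1 : ℂ) else -1) • x j‖

open Finset

theorem ConvexOn.finset_sum {𝕜 E β α : Type*} [Semiring 𝕜] [PartialOrder 𝕜]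
    [AddCommMonoid E] [AddCommMonoid β] [PartialOrder β] [IsOrderedAddMonoid β]
    [SMul 𝕜 E] [Module 𝕜 β] {s : Set E} (hs : Convex 𝕜 s)
    {t : Finset α} {f : α → E → β} (hf : ∀ i ∈ t, ConvexOn 𝕜 s (f i)) :
    ConvexOn 𝕜 s (fun x => ∑ i ∈ t, f i x) := by
  classical
  induction t using Finset.induction_on with
  | empty => simpa using convexOn_const (0 : β) hs
  | insert i t hi ih =>
    simp only [sum_insert hi]
    exact (hf i (mem_insert_self i t)).add (ih fun j hj => hf j (mem_insert_of_mem hj))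

theorem mem_convexHull_units_of_abs_le_one {ι : Type*} [Finite ι] {a : ι → ℝ}
    (ha : ∀ j, |a j| ≤ 1) :
    a ∈ convexHull ℝ (Set.range fun (η : ι → ℤˣ) j => ((η j : ℤ) : ℝ)) := by
  have hvert : Set.univ.pi (fun _ => ({-1, 1} : Set ℝ)) ⊆
      Set.range fun (η : ι → ℤˣ) j => ((η j : ℤ) : ℝ) := by
    intro v hv
    have hsign : ∀ j, ∃ u : ℤˣ, ((u : ℤ) : ℝ) = v j := fun j => by
      obtain h | h : v j = -1 ∨ v j = 1 := hv j trivial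
      exacts [⟨-1, by simp [h]⟩, ⟨1, by simp [h]⟩]
    choose η hη using hsign
    exact ⟨η, funext hη⟩
  refine convexHull_mono hvert ?_
  rw [convexHull_pi, convexHull_pair, segment_eq_Icc (by norm_num)]
  exact fun j _ => abs_le.mp (ha j)

section SignSum

variable {ι E : Type*} [Fintype ι] [DecidableEq ι] [SeminormedAddCommGroup E]

/-- `2 ^ card ι` times the Rademacher average `E‖∑ ε_j y_j‖`. Signs are taken in `ℤˣ` so that the
sign patterns form a group. -/
def signSum (y : ι → E) : ℝ :=
  ∑ ε : ι → ℤˣ, ‖∑ j, ε j • y j‖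

theorem signSum_add_le (y z : ι → E) :
    signSum (y + z) ≤ signSum y + signSum z := by
  rw [signSum, signSum, signSum, ← sum_add_distrib]
  gcongr with ε
  simpa only [Pi.add_apply, smul_add, sum_add_distrib] using norm_add_le _ _

theorem signSum_const_smul {𝕜 : Type*} [NormedField 𝕜] [NormedSpace 𝕜 E] (c : 𝕜) (y : ι → E) :
    signSum (c • y) = ‖c‖ * signSum y := by
  rw [signSum, signSum, mul_sum]
  congr 1 with ε
  rw [← norm_smul, smul_sum]
  simp only [Pi.smul_apply, smul_comm c]

theorem signSum_units_smul (δ : ι → ℤˣ) (y : ι → E) :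
    signSum (fun j => δ j • y j) = signSum y := by
  simp only [signSum, smul_smul]
  exact Fintype.sum_equiv (Equiv.mulRight δ) _ _ fun ε => rfl

theorem convexOn_signSum_smul [NormedSpace ℝ E] (y : ι → E) :
    ConvexOn ℝ Set.univ fun a : ι → ℝ => signSum fun j => a j • y j := by
  refine ConvexOn.finset_sum convex_univ fun ε _ => ?_
  have hL : (fun a : ι → ℝ => ‖∑ j, ε j • a j • y j‖) =
      fun a => ‖Fintype.linearCombination ℝ (fun j => ε j • y j) a‖ := by
    ext a
    simp only [Fintype.linearCombination_apply, smul_comm (a _) (ε _)]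
  exact hL ▸ convexOn_univ_norm.comp_linearMap _

theorem signSum_smul_le [NormedSpace ℝ E] (y : ι → E) {a : ι → ℝ}
    (ha : ∀ j, |a j| ≤ 1) : signSum (fun j => a j • y j) ≤ signSum y := by
  obtain ⟨-, ⟨η, rfl⟩, hle⟩ := (convexOn_signSum_smul y).exists_ge_of_mem_convexHull
    (Set.subset_univ _) (mem_convexHull_units_of_abs_le_one ha)
  refine hle.trans_eq ?_
  simpa only [Int.cast_smul_eq_zsmul, Units.smul_def] using signSum_units_smul η y

theorem signSum_complex_smul_le [NormedSpace ℂ E] (x : ι → E) {lam : ι → ℂ}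
    (hlam : ∀ j, ‖lam j‖ ≤ 1) :
    signSum (fun j => lam j • x j) ≤ 2 * signSum x := by
  have hsplit : (fun j => lam j • x j) =
      (fun j => (lam j).re • x j) + Complex.I • fun j => (lam j).im • x j := by
    ext j
    conv_lhs => rw [← Complex.re_add_im (lam j)]
    rw [add_smul, mul_comm, mul_smul, Complex.coe_smul, Complex.coe_smul]
    rfl
  calc signSum (fun j => lam j • x j)
      ≤ signSum (fun j => (lam j).re • x j) + signSum (fun j => (lam j).im • x j) := by
        rw [hsplit]
        refine (signSum_add_le _ _).trans_eq ?_
        rw [signSum_const_smul, Complex.norm_I, one_mul]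
    _ ≤ signSum x + signSum x := by
        gcongr <;> refine signSum_smul_le x fun j => ?_
        · exact (Complex.abs_re_le_norm _).trans (hlam j)
        · exact (Complex.abs_im_le_norm _).trans (hlam j)
    _ = 2 * signSum x := by ring

end SignSum

def boolEquivUnitsInt : Bool ≃ ℤˣ :=
  Equiv.ofBijective (fun b => if b then 1 else -1) (by decide)

theorem radAvg_eq_signSum {X : Type*} [NormedAddCommGroup X] [NormedSpace ℂ X]
    (N : ℕ) (x : Fin N → X) : radAvg N x = ((2 : ℝ) ^ N)⁻¹ * signSum x := by
  rw [radAvg, signSum]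
  congr 1
  refine Fintype.sum_equiv ((Equiv.refl (Fin N)).arrowCongr boolEquivUnitsInt) _ _ fun σ => ?_
  congr 1
  refine sum_congr rfl fun j _ => ?_
  cases h : σ j <;> simp [boolEquivUnitsInt, h]

/-- Kahane's contraction principle: for scalars `λ_j` with `|λ_j| ≤ 1`,
`E‖∑ ε_j λ_j x_j‖ ≤ 2 E‖∑ ε_j x_j‖`. -/
theorem kahane_contraction_principle {X : Type*}
    [NormedAddCommGroup X] [NormedSpace ℂ X]
    (N : ℕ) (x : Fin N → X) (lam : Fin N → ℂ) (hlam : ∀ j, ‖lam j‖ ≤ 1) :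
    radAvg N (fun j => lam j • x j) ≤ 2 * radAvg N x := by
  rw [radAvg_eq_signSum, radAvg_eq_signSum, mul_left_comm]
  gcongr
  exact signSum_complex_smul_le x hlam
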